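/- arXiv:2204.01188 — 3 statements merged into one kernel-verified Lean document; each statement's English description precedes it below -/
import Mathlib

section
/- Theorem 1 (general slicer form): Let D ≥ 1, p ≥ 1, let (Ω, 𝒜, P) be a probability space, and let S : Ω × ℝ^D → ℝ be jointly measurable with |S(ω,x)| ≤ ‖x‖ for all ω ∈ Ω and x ∈ ℝ^D. For Borel probability measures μ, ν on ℝ^D with finite p-th moments, assume the map ω ↦ W_p^p(S(ω,·)♯μ, S(ω,·)♯ν) is measurable and define 𝒟(μ,ν) = (∫_Ω W_p^p(S(ω,·)♯μ, S(ω,·)♯ν) dP(ω))^{1/p}. Then 𝒟 is a pseudo-metric: 𝒟(μ,μ) = 0, 𝒟(μ,ν) = 𝒟(ν,μ), and 𝒟(μ₁,μ₃) ≤ 𝒟(μ₁,μ₂) + 𝒟(μ₂,μ₃) for all Borel probability measures μ, ν, μ₁, μ₂, μ₃ on ℝ^D with finite p-th moments. -/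
open MeasureTheory ENNReal

noncomputable section

/-- The set of couplings (transport plans) between two measures. -/
def couplings {E : Type*} [MeasurableSpace E] (μ ν : Measure E) : Set (Measure (E × E)) :=
  {π | π.map Prod.fst = μ ∧ π.map Prod.snd = ν}

/-- The Wasserstein distance of order `p`:
`W_p(μ,ν) = (inf over couplings π of ∫ dist(x,y)^p dπ)^(1/p)`. -/
noncomputable def wassersteinDist {E : Type*} [MeasurableSpace E] [PseudoMetricSpace E]
    (p : ℝ) (μ ν : Measure E) : ℝ :=
  (⨅ π ∈ couplings μ ν, ∫⁻ q : E × E, ENNReal.ofReal (dist q.1 q.2 ^ p) ∂π).toReal ^ (1 / p)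

/-- A measure has a finite `p`-th moment. -/
def FiniteMomentP {E : Type*} [MeasurableSpace E] [NormedAddCommGroup E] (p : ℝ)
    (μ : Measure E) : Prop :=
  ∫⁻ x, ENNReal.ofReal (‖x‖ ^ p) ∂μ < ⊤

/-- The generalized sliced Wasserstein discrepancy associated with a random slicer `S`:
`𝒟(μ,ν) = (∫_Ω W_p^p(S(ω,·)♯μ, S(ω,·)♯ν) dP(ω))^(1/p)`. -/
noncomputable def genSlicedW {Ω : Type*} [MeasurableSpace Ω] (P : Measure Ω) {D : ℕ}
    (S : Ω → EuclideanSpace ℝ (Fin D) → ℝ) (p : ℝ)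
    (μ ν : Measure (EuclideanSpace ℝ (Fin D))) : ℝ :=
  (∫ ω, wassersteinDist p (μ.map (S ω)) (ν.map (S ω)) ^ p ∂P) ^ (1 / p)

/-!
Every slice `W_p(S(ω,·)♯μ, S(ω,·)♯ν)` is a Wasserstein distance on `ℝ`, so it vanishes on the
diagonal, is symmetric and satisfies the triangle inequality. For the latter, two couplings of
`(μ₁, μ₂)` and `(μ₂, μ₃)` are glued, by disintegrating both along `μ₂`, into a measure on triples
whose outer marginal couples `μ₁` and `μ₃`; Minkowski's inequality in `L^p` of that measure
bounds its cost. Since `|S(ω,x)| ≤ ‖x‖`, the product coupling bounds `W_p^p` of every slice by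
the `p`-th moments, uniformly in `ω`; so the slice costs are integrable, and Minkowski's
inequality in `L^p(P)` carries the triangle inequality through the integral over `ω`.
-/

open ProbabilityTheory

section Couplings

variable {E : Type*} [MeasurableSpace E]

lemma map_diag_mem_couplings (μ : Measure E) :
    μ.map (fun x => (x, x)) ∈ couplings μ μ := by
  constructor <;> rw [Measure.map_map (by fun_prop) (by fun_prop)] <;> simp [Function.comp_def]

lemma map_swap_mem_couplings {μ ν : Measure E} {π : Measure (E × E)} (hπ : π ∈ couplings μ ν) :
    π.map Prod.swap ∈ couplings ν μ := by
  constructor <;> rw [Measure.map_map (by fun_prop) measurable_swap]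
  exacts [hπ.2, hπ.1]

lemma prod_mem_couplings (μ ν : Measure E) [IsProbabilityMeasure μ] [IsProbabilityMeasure ν] :
    μ.prod ν ∈ couplings μ ν :=
  ⟨Measure.fst_prod, Measure.snd_prod⟩

lemma isFiniteMeasure_of_mem_couplings {μ ν : Measure E} [IsFiniteMeasure μ]
    {π : Measure (E × E)} (hπ : π ∈ couplings μ ν) : IsFiniteMeasure π := by
  have : IsFiniteMeasure (π.map Prod.fst) := hπ.1 ▸ ‹_›
  exact Measure.isFiniteMeasure_of_map measurable_fst.aemeasurable

lemma lintegral_fst_of_mem_couplings {μ ν : Measure E} {π : Measure (E × E)}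
    (hπ : π ∈ couplings μ ν) {f : E → ℝ≥0∞} (hf : Measurable f) :
    ∫⁻ q, f q.1 ∂π = ∫⁻ x, f x ∂μ := by
  rw [← hπ.1, lintegral_map hf measurable_fst]

lemma lintegral_snd_of_mem_couplings {μ ν : Measure E} {π : Measure (E × E)}
    (hπ : π ∈ couplings μ ν) {f : E → ℝ≥0∞} (hf : Measurable f) :
    ∫⁻ q, f q.2 ∂π = ∫⁻ x, f x ∂ν := by
  rw [← hπ.2, lintegral_map hf measurable_snd]

end Couplings

section Transport

variable {E : Type*} [MeasurableSpace E] [PseudoMetricSpace E] {p : ℝ}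

def transportCost (p : ℝ) (π : Measure (E × E)) : ℝ≥0∞ :=
  ∫⁻ q, ENNReal.ofReal (dist q.1 q.2 ^ p) ∂π

def optimalCost (p : ℝ) (μ ν : Measure E) : ℝ≥0∞ :=
  ⨅ π ∈ couplings μ ν, transportCost p π

lemma wassersteinDist_eq_optimalCost (p : ℝ) (μ ν : Measure E) :
    wassersteinDist p μ ν = (optimalCost p μ ν).toReal ^ (1 / p) := rfl

lemma wassersteinDist_rpow (hp : p ≠ 0) (μ ν : Measure E) :
    wassersteinDist p μ ν ^ p = (optimalCost p μ ν).toReal := by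
  rw [wassersteinDist_eq_optimalCost, one_div, Real.rpow_inv_rpow ENNReal.toReal_nonneg hp]

lemma transportCost_eq_lintegral_edist (hp : 0 ≤ p) (π : Measure (E × E)) :
    transportCost p π = ∫⁻ q, edist q.1 q.2 ^ p ∂π := by
  refine lintegral_congr fun q => ?_
  rw [← ENNReal.ofReal_rpow_of_nonneg dist_nonneg hp, edist_dist]

lemma optimalCost_le {μ ν : Measure E} {π : Measure (E × E)} (hπ : π ∈ couplings μ ν) :
    optimalCost p μ ν ≤ transportCost p π :=
  biInf_le _ hπ

lemma optimalCost_rpow {q : ℝ} (hq : 0 < q) (μ ν : Measure E) :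
    optimalCost p μ ν ^ q = ⨅ π : couplings μ ν, transportCost p (π : Measure (E × E)) ^ q := by
  rw [optimalCost, iInf_subtype']
  exact (ENNReal.orderIsoRpow q hq).map_iInf _

lemma optimalCost_self (hp : p ≠ 0) (μ : Measure E) : optimalCost p μ μ = 0 := by
  refine le_antisymm ((optimalCost_le (map_diag_mem_couplings μ)).trans ?_) zero_le
  refine (lintegral_map_le _ _).trans ?_
  simp [Real.zero_rpow hp]

lemma transportCost_map_swap (π : Measure (E × E)) :
    transportCost p (π.map Prod.swap) = transportCost p π := by
  rw [transportCost, show (Prod.swap : E × E → E × E) = MeasurableEquiv.prodComm from rfl,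
    lintegral_map_equiv]
  exact lintegral_congr fun q => by rw [dist_comm]; rfl

lemma optimalCost_comm_le (μ ν : Measure E) : optimalCost p ν μ ≤ optimalCost p μ ν :=
  le_iInf₂ fun π hπ =>
    (optimalCost_le (map_swap_mem_couplings hπ)).trans_eq (transportCost_map_swap π)

lemma optimalCost_comm (μ ν : Measure E) : optimalCost p μ ν = optimalCost p ν μ :=
  (optimalCost_comm_le ν μ).antisymm (optimalCost_comm_le μ ν)

lemma wassersteinDist_comm (μ ν : Measure E) : wassersteinDist p μ ν = wassersteinDist p ν μ := by
  rw [wassersteinDist_eq_optimalCost, wassersteinDist_eq_optimalCost, optimalCost_comm]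

lemma transportCost_map [SecondCountableTopology E] [OpensMeasurableSpace E] (hp : 0 ≤ p)
    {X : Type*} [MeasurableSpace X] (τ : Measure X) {f : X → E × E} (hf : Measurable f) :
    transportCost p (τ.map f) = ∫⁻ x, edist (f x).1 (f x).2 ^ p ∂τ := by
  rw [transportCost_eq_lintegral_edist hp, lintegral_map (by fun_prop) hf]

end Transport

lemma exists_glue_of_fst_eq {α β γ : Type*} [MeasurableSpace α] [MeasurableSpace β]
    [MeasurableSpace γ] [StandardBorelSpace α] [Nonempty α] [StandardBorelSpace γ] [Nonempty γ]
    (ρ : Measure (β × α)) (π : Measure (β × γ)) [IsFiniteMeasure ρ] [IsFiniteMeasure π]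
    (h : ρ.fst = π.fst) :
    ∃ τ : Measure (β × α × γ),
      τ.map (Prod.map id Prod.fst) = ρ ∧ τ.map (Prod.map id Prod.snd) = π := by
  refine ⟨π.fst ⊗ₘ (ρ.condKernel ×ₖ π.condKernel), ?_, ?_⟩
  · rw [← Measure.compProd_map measurable_fst, ← Kernel.fst_eq, Kernel.fst_prod, ← h,
      ρ.disintegrate]
  · rw [← Measure.compProd_map measurable_snd, ← Kernel.snd_eq, Kernel.snd_prod,
      π.disintegrate]

lemma lintegral_rpow_one_div_le_add {Ω : Type*} [MeasurableSpace Ω] {P : Measure Ω}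
    {p : ℝ} (hp : 1 ≤ p) {f g h : Ω → ℝ≥0∞} (hg : AEMeasurable g P) (hh : AEMeasurable h P)
    (hf : ∀ ω, f ω ^ (1 / p) ≤ g ω ^ (1 / p) + h ω ^ (1 / p)) :
    (∫⁻ ω, f ω ∂P) ^ (1 / p) ≤ (∫⁻ ω, g ω ∂P) ^ (1 / p) + (∫⁻ ω, h ω ∂P) ^ (1 / p) := by
  have hp0 : 0 < p := zero_lt_one.trans_le hp
  have root_pow (u : Ω → ℝ≥0∞) (ω : Ω) : (u ω ^ (1 / p)) ^ p = u ω := by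
    rw [← ENNReal.rpow_mul, one_div_mul_cancel hp0.ne', ENNReal.rpow_one]
  calc (∫⁻ ω, f ω ∂P) ^ (1 / p)
      ≤ (∫⁻ ω, (g ω ^ (1 / p) + h ω ^ (1 / p)) ^ p ∂P) ^ (1 / p) := by
        gcongr with ω
        simpa only [root_pow] using ENNReal.rpow_le_rpow (hf ω) hp0.le
    _ ≤ (∫⁻ ω, (g ω ^ (1 / p)) ^ p ∂P) ^ (1 / p) + (∫⁻ ω, (h ω ^ (1 / p)) ^ p ∂P) ^ (1 / p) :=
        ENNReal.lintegral_Lp_add_le (hg.pow_const _) (hh.pow_const _) hp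
    _ = (∫⁻ ω, g ω ∂P) ^ (1 / p) + (∫⁻ ω, h ω ∂P) ^ (1 / p) := by simp only [root_pow]

section Triangle

variable {E : Type*} [MeasurableSpace E] [PseudoMetricSpace E] [SecondCountableTopology E]
  [OpensMeasurableSpace E] [StandardBorelSpace E] [Nonempty E] {p : ℝ}

lemma optimalCost_rpow_le_transportCost_add (hp : 1 ≤ p) {m₁ m₂ m₃ : Measure E}
    [IsFiniteMeasure m₁] [IsFiniteMeasure m₂] {π₁₂ π₂₃ : Measure (E × E)}
    (h₁₂ : π₁₂ ∈ couplings m₁ m₂) (h₂₃ : π₂₃ ∈ couplings m₂ m₃) :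
    optimalCost p m₁ m₃ ^ (1 / p) ≤
      transportCost p π₁₂ ^ (1 / p) + transportCost p π₂₃ ^ (1 / p) := by
  have hp0 : 0 < p := zero_lt_one.trans_le hp
  have := isFiniteMeasure_of_mem_couplings h₁₂
  have := isFiniteMeasure_of_mem_couplings h₂₃
  -- `τ` lives on triples `(x₂, x₁, x₃)`
  obtain ⟨τ, hτ₁₂, hτ₂₃⟩ := exists_glue_of_fst_eq (π₁₂.map Prod.swap) π₂₃ <| by
    rw [Measure.fst, Measure.map_map measurable_fst measurable_swap]
    exact h₁₂.2.trans h₂₃.1.symm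
  have hτ : τ.map Prod.snd ∈ couplings m₁ m₃ := by
    constructor
    · rw [Measure.map_map measurable_fst measurable_snd,
        show (Prod.fst ∘ Prod.snd : E × E × E → E) = Prod.snd ∘ Prod.map id Prod.fst from rfl,
        ← Measure.map_map measurable_snd (by fun_prop), hτ₁₂,
        Measure.map_map measurable_snd measurable_swap]
      exact h₁₂.1
    · rw [Measure.map_map measurable_snd measurable_snd,
        show (Prod.snd ∘ Prod.snd : E × E × E → E) = Prod.snd ∘ Prod.map id Prod.snd from rfl,
        ← Measure.map_map measurable_snd (by fun_prop), hτ₂₃]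
      exact h₂₃.2
  rw [← transportCost_map_swap π₁₂, ← hτ₁₂, ← hτ₂₃, transportCost_map hp0.le _ (by fun_prop),
    transportCost_map hp0.le _ (by fun_prop)]
  calc optimalCost p m₁ m₃ ^ (1 / p)
      ≤ transportCost p (τ.map Prod.snd) ^ (1 / p) := by gcongr; exact optimalCost_le hτ
    _ ≤ _ := by
      rw [transportCost_map hp0.le _ measurable_snd]
      refine lintegral_rpow_one_div_le_add hp (by fun_prop) (by fun_prop) fun x => ?_
      simp only [one_div, ENNReal.rpow_rpow_inv hp0.ne']
      exact edist_triangle_left _ _ _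

lemma optimalCost_triangle (hp : 1 ≤ p) (m₁ m₂ m₃ : Measure E)
    [IsFiniteMeasure m₁] [IsFiniteMeasure m₂] :
    optimalCost p m₁ m₃ ^ (1 / p) ≤
      optimalCost p m₁ m₂ ^ (1 / p) + optimalCost p m₂ m₃ ^ (1 / p) := by
  have hq : 0 < 1 / p := by positivity
  rw [optimalCost_rpow hq m₁ m₂, optimalCost_rpow hq m₂ m₃]
  exact ENNReal.le_iInf_add_iInf fun π₁₂ π₂₃ =>
    optimalCost_rpow_le_transportCost_add hp π₁₂.2 π₂₃.2

end Triangle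

section Moments

variable {E F : Type*} [NormedAddCommGroup E] [MeasurableSpace E]
  [NormedAddCommGroup F] [MeasurableSpace F] {p : ℝ}

omit [MeasurableSpace E] in
lemma ofReal_dist_rpow_le (hp : 1 ≤ p) (x y : E) :
    ENNReal.ofReal (dist x y ^ p) ≤
      2 ^ (p - 1) * (ENNReal.ofReal (‖x‖ ^ p) + ENNReal.ofReal (‖y‖ ^ p)) := by
  have hp0 : 0 ≤ p := zero_le_one.trans hp
  simp only [← ENNReal.ofReal_rpow_of_nonneg (norm_nonneg _) hp0,
    ← ENNReal.ofReal_rpow_of_nonneg dist_nonneg hp0]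
  calc ENNReal.ofReal (dist x y) ^ p
      ≤ (ENNReal.ofReal ‖x‖ + ENNReal.ofReal ‖y‖) ^ p := by
        rw [← ENNReal.ofReal_add (norm_nonneg _) (norm_nonneg _)]
        gcongr
        exact dist_le_norm_add_norm x y
    _ ≤ _ := ENNReal.rpow_add_le_mul_rpow_add_rpow _ _ hp

lemma optimalCost_le_moments [OpensMeasurableSpace E] (hp : 1 ≤ p) (μ ν : Measure E)
    [IsProbabilityMeasure μ] [IsProbabilityMeasure ν] :
    optimalCost p μ ν ≤
      2 ^ (p - 1) * (∫⁻ x, ENNReal.ofReal (‖x‖ ^ p) ∂μ + ∫⁻ x, ENNReal.ofReal (‖x‖ ^ p) ∂ν) := by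
  refine (optimalCost_le (prod_mem_couplings μ ν)).trans ?_
  calc transportCost p (μ.prod ν)
      ≤ ∫⁻ q, 2 ^ (p - 1) * (ENNReal.ofReal (‖q.1‖ ^ p) + ENNReal.ofReal (‖q.2‖ ^ p)) ∂μ.prod ν :=
        lintegral_mono fun q => ofReal_dist_rpow_le hp q.1 q.2
    _ = _ := by
        rw [lintegral_const_mul _ (by fun_prop), lintegral_add_left (by fun_prop),
          lintegral_fst_of_mem_couplings (f := fun x => ENNReal.ofReal (‖x‖ ^ p))
            (prod_mem_couplings μ ν) (by fun_prop),
          lintegral_snd_of_mem_couplings (f := fun x => ENNReal.ofReal (‖x‖ ^ p))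
            (prod_mem_couplings μ ν) (by fun_prop)]

lemma lintegral_norm_rpow_map_le (hp : 0 ≤ p) (μ : Measure E) {f : E → F}
    (hf : ∀ x, ‖f x‖ ≤ ‖x‖) :
    ∫⁻ y, ENNReal.ofReal (‖y‖ ^ p) ∂μ.map f ≤ ∫⁻ x, ENNReal.ofReal (‖x‖ ^ p) ∂μ :=
  (lintegral_map_le _ _).trans (lintegral_mono fun x => by gcongr; exact hf x)

lemma optimalCost_map_le [OpensMeasurableSpace F] (hp : 1 ≤ p) (μ ν : Measure E)
    [IsProbabilityMeasure μ] [IsProbabilityMeasure ν] {f : E → F} (hfm : Measurable f)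
    (hf : ∀ x, ‖f x‖ ≤ ‖x‖) :
    optimalCost p (μ.map f) (ν.map f) ≤
      2 ^ (p - 1) * (∫⁻ x, ENNReal.ofReal (‖x‖ ^ p) ∂μ + ∫⁻ x, ENNReal.ofReal (‖x‖ ^ p) ∂ν) := by
  have := Measure.isProbabilityMeasure_map (μ := μ) hfm.aemeasurable
  have := Measure.isProbabilityMeasure_map (μ := ν) hfm.aemeasurable
  have hp0 : 0 ≤ p := zero_le_one.trans hp
  refine (optimalCost_le_moments hp _ _).trans ?_
  gcongr <;> exact lintegral_norm_rpow_map_le hp0 _ hf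

end Moments

section Slicing

variable {Ω : Type*} [MeasurableSpace Ω] (P : Measure Ω) {D : ℕ}
  (S : Ω → EuclideanSpace ℝ (Fin D) → ℝ) {p : ℝ}

def slicedCost (p : ℝ) (μ ν : Measure (EuclideanSpace ℝ (Fin D))) : ℝ≥0∞ :=
  ∫⁻ ω, optimalCost p (μ.map (S ω)) (ν.map (S ω)) ∂P

lemma genSlicedW_eq_integral (hp : p ≠ 0) (μ ν : Measure (EuclideanSpace ℝ (Fin D))) :
    genSlicedW P S p μ ν =
      (∫ ω, (optimalCost p (μ.map (S ω)) (ν.map (S ω))).toReal ∂P) ^ (1 / p) := by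
  simp_rw [genSlicedW, wassersteinDist_rpow hp]

lemma genSlicedW_self (hp : p ≠ 0) (μ : Measure (EuclideanSpace ℝ (Fin D))) :
    genSlicedW P S p μ μ = 0 := by
  simp [genSlicedW_eq_integral P S hp, optimalCost_self hp, hp]

lemma genSlicedW_comm (μ ν : Measure (EuclideanSpace ℝ (Fin D))) :
    genSlicedW P S p μ ν = genSlicedW P S p ν μ := by
  simp only [genSlicedW, wassersteinDist_comm (μ.map _)]

lemma genSlicedW_eq_slicedCost (hp : p ≠ 0) {μ ν : Measure (EuclideanSpace ℝ (Fin D))}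
    (hm : Measurable fun ω => optimalCost p (μ.map (S ω)) (ν.map (S ω)))
    (hfin : ∀ ω, optimalCost p (μ.map (S ω)) (ν.map (S ω)) < ⊤) :
    genSlicedW P S p μ ν = (slicedCost P S p μ ν ^ (1 / p)).toReal := by
  rw [genSlicedW_eq_integral P S hp, integral_toReal hm.aemeasurable (ae_of_all _ hfin),
    ENNReal.toReal_rpow, slicedCost]

lemma measurable_optimalCost_map (hp : p ≠ 0) {μ ν : Measure (EuclideanSpace ℝ (Fin D))}
    (hmeas : Measurable fun ω => wassersteinDist p (μ.map (S ω)) (ν.map (S ω)) ^ p)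
    (hfin : ∀ ω, optimalCost p (μ.map (S ω)) (ν.map (S ω)) < ⊤) :
    Measurable fun ω => optimalCost p (μ.map (S ω)) (ν.map (S ω)) := by
  simp_rw [wassersteinDist_rpow hp] at hmeas
  convert hmeas.ennreal_ofReal with ω
  exact (ENNReal.ofReal_toReal (hfin ω).ne).symm

lemma slicedCost_triangle (hp : 1 ≤ p) (μ₁ μ₂ μ₃ : Measure (EuclideanSpace ℝ (Fin D)))
    [IsFiniteMeasure μ₁] [IsFiniteMeasure μ₂]
    (h₁₂ : Measurable fun ω => optimalCost p (μ₁.map (S ω)) (μ₂.map (S ω)))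
    (h₂₃ : Measurable fun ω => optimalCost p (μ₂.map (S ω)) (μ₃.map (S ω))) :
    slicedCost P S p μ₁ μ₃ ^ (1 / p) ≤
      slicedCost P S p μ₁ μ₂ ^ (1 / p) + slicedCost P S p μ₂ μ₃ ^ (1 / p) :=
  lintegral_rpow_one_div_le_add hp h₁₂.aemeasurable h₂₃.aemeasurable fun _ =>
    optimalCost_triangle hp _ _ _

variable {S}

omit [MeasurableSpace Ω] in
lemma optimalCost_map_slice_le (hp : 1 ≤ p) (hS : ∀ ω, Measurable (S ω))
    (hbound : ∀ ω x, |S ω x| ≤ ‖x‖) (μ ν : Measure (EuclideanSpace ℝ (Fin D)))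
    [IsProbabilityMeasure μ] [IsProbabilityMeasure ν] (ω : Ω) :
    optimalCost p (μ.map (S ω)) (ν.map (S ω)) ≤
      2 ^ (p - 1) * (∫⁻ x, ENNReal.ofReal (‖x‖ ^ p) ∂μ + ∫⁻ x, ENNReal.ofReal (‖x‖ ^ p) ∂ν) :=
  optimalCost_map_le hp μ ν (hS ω) fun x => (Real.norm_eq_abs _).trans_le (hbound ω x)

omit [MeasurableSpace Ω] in
lemma optimalCost_map_slice_lt_top (hp : 1 ≤ p) (hS : ∀ ω, Measurable (S ω))
    (hbound : ∀ ω x, |S ω x| ≤ ‖x‖) {μ ν : Measure (EuclideanSpace ℝ (Fin D))}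
    [IsProbabilityMeasure μ] [IsProbabilityMeasure ν]
    (hμ : FiniteMomentP p μ) (hν : FiniteMomentP p ν) (ω : Ω) :
    optimalCost p (μ.map (S ω)) (ν.map (S ω)) < ⊤ :=
  (optimalCost_map_slice_le hp hS hbound μ ν ω).trans_lt <| by
    unfold FiniteMomentP at hμ hν; finiteness

lemma slicedCost_lt_top [IsFiniteMeasure P] (hp : 1 ≤ p) (hS : ∀ ω, Measurable (S ω))
    (hbound : ∀ ω x, |S ω x| ≤ ‖x‖) {μ ν : Measure (EuclideanSpace ℝ (Fin D))}
    [IsProbabilityMeasure μ] [IsProbabilityMeasure ν]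
    (hμ : FiniteMomentP p μ) (hν : FiniteMomentP p ν) :
    slicedCost P S p μ ν < ⊤ :=
  (lintegral_mono (optimalCost_map_slice_le hp hS hbound μ ν)).trans_lt <| by
    unfold FiniteMomentP at hμ hν; rw [lintegral_const]; finiteness

lemma genSlicedW_triangle [IsFiniteMeasure P] (hp : 1 ≤ p) (hS : ∀ ω, Measurable (S ω))
    (hbound : ∀ ω x, |S ω x| ≤ ‖x‖) {μ₁ μ₂ μ₃ : Measure (EuclideanSpace ℝ (Fin D))}
    [IsProbabilityMeasure μ₁] [IsProbabilityMeasure μ₂] [IsProbabilityMeasure μ₃]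
    (h₁ : FiniteMomentP p μ₁) (h₂ : FiniteMomentP p μ₂) (h₃ : FiniteMomentP p μ₃)
    (h₁₃ : Measurable fun ω => wassersteinDist p (μ₁.map (S ω)) (μ₃.map (S ω)) ^ p)
    (h₁₂ : Measurable fun ω => wassersteinDist p (μ₁.map (S ω)) (μ₂.map (S ω)) ^ p)
    (h₂₃ : Measurable fun ω => wassersteinDist p (μ₂.map (S ω)) (μ₃.map (S ω)) ^ p) :
    genSlicedW P S p μ₁ μ₃ ≤ genSlicedW P S p μ₁ μ₂ + genSlicedW P S p μ₂ μ₃ := by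
  have hp0 : p ≠ 0 := (zero_lt_one.trans_le hp).ne'
  have f₁₃ := optimalCost_map_slice_lt_top hp hS hbound h₁ h₃
  have f₁₂ := optimalCost_map_slice_lt_top hp hS hbound h₁ h₂
  have f₂₃ := optimalCost_map_slice_lt_top hp hS hbound h₂ h₃
  have m₁₂ := measurable_optimalCost_map S hp0 h₁₂ f₁₂
  have m₂₃ := measurable_optimalCost_map S hp0 h₂₃ f₂₃
  have r₁₂ : slicedCost P S p μ₁ μ₂ ^ (1 / p) ≠ ⊤ :=
    ENNReal.rpow_ne_top_of_nonneg (by positivity) (slicedCost_lt_top P hp hS hbound h₁ h₂).ne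
  have r₂₃ : slicedCost P S p μ₂ μ₃ ^ (1 / p) ≠ ⊤ :=
    ENNReal.rpow_ne_top_of_nonneg (by positivity) (slicedCost_lt_top P hp hS hbound h₂ h₃).ne
  rw [genSlicedW_eq_slicedCost P S hp0 (measurable_optimalCost_map S hp0 h₁₃ f₁₃) f₁₃,
    genSlicedW_eq_slicedCost P S hp0 m₁₂ f₁₂, genSlicedW_eq_slicedCost P S hp0 m₂₃ f₂₃,
    ← ENNReal.toReal_add r₁₂ r₂₃]
  exact ENNReal.toReal_mono (ENNReal.add_ne_top.2 ⟨r₁₂, r₂₃⟩)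
    (slicedCost_triangle P S hp μ₁ μ₂ μ₃ m₁₂ m₂₃)

end Slicing

theorem genSlicedW_pseudometric_general (D : ℕ) (p : ℝ) (hp : 1 ≤ p)
    {Ω : Type*} [MeasurableSpace Ω] (P : Measure Ω) [IsProbabilityMeasure P]
    (S : Ω → EuclideanSpace ℝ (Fin D) → ℝ)
    (hS : Measurable (Function.uncurry S))
    (hbound : ∀ ω x, |S ω x| ≤ ‖x‖)
    (hmeas : ∀ μ ν : Measure (EuclideanSpace ℝ (Fin D)), IsProbabilityMeasure μ →
      IsProbabilityMeasure ν → FiniteMomentP p μ → FiniteMomentP p ν →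
      Measurable fun ω => wassersteinDist p (μ.map (S ω)) (ν.map (S ω)) ^ p)
    (μ ν μ₁ μ₂ μ₃ : Measure (EuclideanSpace ℝ (Fin D)))
    [IsProbabilityMeasure μ₁] [IsProbabilityMeasure μ₂] [IsProbabilityMeasure μ₃]
    (h₁ : FiniteMomentP p μ₁) (h₂ : FiniteMomentP p μ₂) (h₃ : FiniteMomentP p μ₃) :
    genSlicedW P S p μ μ = 0 ∧ genSlicedW P S p μ ν = genSlicedW P S p ν μ ∧
      genSlicedW P S p μ₁ μ₃ ≤ genSlicedW P S p μ₁ μ₂ + genSlicedW P S p μ₂ μ₃ :=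
  ⟨genSlicedW_self P S (zero_lt_one.trans_le hp).ne' μ, genSlicedW_comm P S μ ν,
    genSlicedW_triangle P hp (fun ω => hS.comp measurable_prodMk_left) hbound h₁ h₂ h₃
      (hmeas _ _ ‹_› ‹_› h₁ h₃) (hmeas _ _ ‹_› ‹_› h₁ h₂) (hmeas _ _ ‹_› ‹_› h₂ h₃)⟩

/-- Theorem 1 (general slicer form): if `S : Ω × ℝ^D → ℝ` is jointly measurable with
`|S(ω,x)| ≤ ‖x‖`, and the maps `ω ↦ W_p^p(S(ω,·)♯μ, S(ω,·)♯ν)` are measurable, then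
`𝒟(μ,ν) = (∫_Ω W_p^p(S(ω,·)♯μ, S(ω,·)♯ν) dP(ω))^(1/p)` is a pseudo-metric on Borel probability
measures on `ℝ^D` with finite `p`-th moments. -/
theorem genSlicedW_pseudometric (D : ℕ) (hD : 1 ≤ D) (p : ℝ) (hp : 1 ≤ p)
    {Ω : Type*} [MeasurableSpace Ω] (P : Measure Ω) [IsProbabilityMeasure P]
    (S : Ω → EuclideanSpace ℝ (Fin D) → ℝ)
    (hS : Measurable (Function.uncurry S))
    (hbound : ∀ ω x, |S ω x| ≤ ‖x‖)
    (hmeas : ∀ μ ν : Measure (EuclideanSpace ℝ (Fin D)), IsProbabilityMeasure μ →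
      IsProbabilityMeasure ν → FiniteMomentP p μ → FiniteMomentP p ν →
      Measurable fun ω => wassersteinDist p (μ.map (S ω)) (ν.map (S ω)) ^ p)
    (μ ν μ₁ μ₂ μ₃ : Measure (EuclideanSpace ℝ (Fin D)))
    [IsProbabilityMeasure μ] [IsProbabilityMeasure ν] [IsProbabilityMeasure μ₁]
    [IsProbabilityMeasure μ₂] [IsProbabilityMeasure μ₃]
    (hμ : FiniteMomentP p μ) (hν : FiniteMomentP p ν) (h₁ : FiniteMomentP p μ₁)
    (h₂ : FiniteMomentP p μ₂) (h₃ : FiniteMomentP p μ₃) :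
    genSlicedW P S p μ μ = 0 ∧ genSlicedW P S p μ ν = genSlicedW P S p ν μ ∧
      genSlicedW P S p μ₁ μ₃ ≤ genSlicedW P S p μ₁ μ₂ + genSlicedW P S p μ₂ μ₃ :=
  genSlicedW_pseudometric_general D p hp P S hS hbound hmeas μ ν μ₁ μ₂ μ₃ h₁ h₂ h₃

end
end

section
/- Norm bound for a stride-2 convolution layer (used in the proof of Proposition 2): let c' ≥ 1 and let m ≥ 2 be even. For every X ∈ ℝ^{c'×m×m} and K ∈ ℝ^{c'×2×2}, let Y ∈ ℝ^{(m/2)×(m/2)} be given by Y_{i,j} = Σ_{h=1}^{c'} Σ_{i'=0}^{1} Σ_{j'=0}^{1} X_{h,2(i−1)+i'+1,2(j−1)+j'+1}·K_{h,i'+1,j'+1} for 1 ≤ i,j ≤ m/2. Then ‖Y‖₂ ≤ ‖X‖₂·‖K‖₂. -/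
set_option maxHeartbeats 1000000


open MeasureTheory ENNReal

noncomputable section

/-- Stride-2 convolution of a `c' × (2m) × (2m)` tensor with a `c' × 2 × 2` kernel (one output
channel): `Y i j = ∑ h, ∑ i', ∑ j', X h (2i+i') (2j+j') * K h i' j'`. -/
def convStride2 {c' : ℕ} (m : ℕ) (X : Fin c' → Fin (2 * m) → Fin (2 * m) → ℝ)
    (K : Fin c' → Fin 2 → Fin 2 → ℝ) (i j : Fin m) : ℝ :=
  ∑ h : Fin c', ∑ i' : Fin 2, ∑ j' : Fin 2,
    X h ⟨2 * i.1 + i'.1, by have h1 := i.isLt; have h2 := i'.isLt; omega⟩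
        ⟨2 * j.1 + j'.1, by have h1 := j.isLt; have h2 := j'.isLt; omega⟩ * K h i' j'

lemma sum_comm3 {α β γ : Type*} [Fintype α] [Fintype β] [Fintype γ] (f : α → β → γ → ℝ) :
    ∑ a : α, ∑ b : β, ∑ c : γ, f a b c = ∑ c : γ, ∑ a : α, ∑ b : β, f a b c := by
  calc ∑ a : α, ∑ b : β, ∑ c : γ, f a b c
      = ∑ a : α, ∑ c : γ, ∑ b : β, f a b c :=
        Finset.sum_congr rfl fun a _ => Finset.sum_comm
    _ = ∑ c : γ, ∑ a : α, ∑ b : β, f a b c := Finset.sum_comm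

lemma sum_pair_aux (m : ℕ) (f : Fin (2 * m) → ℝ) :
    ∑ i : Fin m, ∑ i' : Fin 2,
      f ⟨2 * i.1 + i'.1, by have := i.isLt; have := i'.isLt; omega⟩ = ∑ a : Fin (2 * m), f a := by
  have h := Fintype.sum_bijective
    (fun p : Fin m × Fin 2 =>
      (⟨2 * p.1.1 + p.2.1, by have := p.1.isLt; have := p.2.isLt; omega⟩ : Fin (2 * m)))
    ⟨?_, ?_⟩ (fun p : Fin m × Fin 2 =>
      f ⟨2 * p.1.1 + p.2.1, by have := p.1.isLt; have := p.2.isLt; omega⟩) f (fun p => rfl)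
  case _ => rw [← h, Fintype.sum_prod_type]
  · rintro ⟨a, b⟩ ⟨c, d⟩ h
    simp only [Fin.mk.injEq] at h
    have := a.isLt; have := b.isLt; have := c.isLt; have := d.isLt
    have h1 : a.1 = c.1 ∧ b.1 = d.1 := by omega
    simp [Prod.ext_iff, Fin.ext_iff, h1.1, h1.2]
  · intro a
    have := a.isLt
    refine ⟨(⟨a.1 / 2, by omega⟩, ⟨a.1 % 2, by omega⟩), ?_⟩
    ext
    simp only
    omega

lemma sum_pair2 (m : ℕ) (g : Fin (2 * m) → Fin (2 * m) → ℝ) :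
    ∑ i : Fin m, ∑ j : Fin m, ∑ i' : Fin 2, ∑ j' : Fin 2,
      g ⟨2 * i.1 + i'.1, by have := i.isLt; have := i'.isLt; omega⟩
        ⟨2 * j.1 + j'.1, by have := j.isLt; have := j'.isLt; omega⟩
      = ∑ a : Fin (2 * m), ∑ b : Fin (2 * m), g a b := by
  calc ∑ i : Fin m, ∑ j : Fin m, ∑ i' : Fin 2, ∑ j' : Fin 2,
        g ⟨2 * i.1 + i'.1, by have := i.isLt; have := i'.isLt; omega⟩
          ⟨2 * j.1 + j'.1, by have := j.isLt; have := j'.isLt; omega⟩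
      = ∑ i : Fin m, ∑ i' : Fin 2, ∑ j : Fin m, ∑ j' : Fin 2,
        g ⟨2 * i.1 + i'.1, by have := i.isLt; have := i'.isLt; omega⟩
          ⟨2 * j.1 + j'.1, by have := j.isLt; have := j'.isLt; omega⟩ :=
        Finset.sum_congr rfl fun i _ => Finset.sum_comm
    _ = ∑ a : Fin (2 * m), ∑ j : Fin m, ∑ j' : Fin 2,
        g a ⟨2 * j.1 + j'.1, by have := j.isLt; have := j'.isLt; omega⟩ :=
        sum_pair_aux m (fun a => ∑ j : Fin m, ∑ j' : Fin 2,
          g a ⟨2 * j.1 + j'.1, by have := j.isLt; have := j'.isLt; omega⟩)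
    _ = ∑ a : Fin (2 * m), ∑ b : Fin (2 * m), g a b :=
        Finset.sum_congr rfl fun a _ => sum_pair_aux m (fun b => g a b)

/-- Norm bound for a stride-2 convolution layer: `‖Y‖₂ ≤ ‖X‖₂ · ‖K‖₂` (the spatial size of `X`
is the even number `2m` with `m ≥ 1`, i.e. at least 2). -/
theorem convStride2_norm_le (c' m : ℕ) (hc' : 1 ≤ c') (hm : 1 ≤ m)
    (X : Fin c' → Fin (2 * m) → Fin (2 * m) → ℝ) (K : Fin c' → Fin 2 → Fin 2 → ℝ) :
    Real.sqrt (∑ i : Fin m, ∑ j : Fin m, convStride2 m X K i j ^ 2) ≤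
      Real.sqrt (∑ h : Fin c', ∑ i : Fin (2 * m), ∑ j : Fin (2 * m), X h i j ^ 2) *
        Real.sqrt (∑ h : Fin c', ∑ i' : Fin 2, ∑ j' : Fin 2, K h i' j' ^ 2) := by
  set B : ℝ := ∑ h : Fin c', ∑ i' : Fin 2, ∑ j' : Fin 2, K h i' j' ^ 2 with hB
  have hBnn : 0 ≤ B := by
    refine Finset.sum_nonneg fun _ _ => Finset.sum_nonneg fun _ _ =>
      Finset.sum_nonneg fun _ _ => sq_nonneg _
  clear_value B
  have key : ∀ i j : Fin m, convStride2 m X K i j ^ 2 ≤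
      (∑ h : Fin c', ∑ i' : Fin 2, ∑ j' : Fin 2,
        X h ⟨2 * i.1 + i'.1, by have := i.isLt; have := i'.isLt; omega⟩
            ⟨2 * j.1 + j'.1, by have := j.isLt; have := j'.isLt; omega⟩ ^ 2) * B := by
    intro i j
    have := Finset.sum_mul_sq_le_sq_mul_sq (Finset.univ : Finset (Fin c' × Fin 2 × Fin 2))
      (fun p => X p.1 ⟨2 * i.1 + p.2.1.1, by have := i.isLt; have := p.2.1.isLt; omega⟩
            ⟨2 * j.1 + p.2.2.1, by have := j.isLt; have := p.2.2.isLt; omega⟩)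
      (fun p => K p.1 p.2.1 p.2.2)
    simpa [convStride2, hB, Fintype.sum_prod_type] using this
  have hsum : ∑ i : Fin m, ∑ j : Fin m, convStride2 m X K i j ^ 2 ≤
      (∑ h : Fin c', ∑ a : Fin (2 * m), ∑ b : Fin (2 * m), X h a b ^ 2) * B := by
    calc ∑ i : Fin m, ∑ j : Fin m, convStride2 m X K i j ^ 2
        ≤ ∑ i : Fin m, ∑ j : Fin m, (∑ h : Fin c', ∑ i' : Fin 2, ∑ j' : Fin 2,
            X h ⟨2 * i.1 + i'.1, by have := i.isLt; have := i'.isLt; omega⟩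
                ⟨2 * j.1 + j'.1, by have := j.isLt; have := j'.isLt; omega⟩ ^ 2) * B := by
          exact Finset.sum_le_sum fun i _ => Finset.sum_le_sum fun j _ => key i j
      _ = (∑ h : Fin c', ∑ a : Fin (2 * m), ∑ b : Fin (2 * m), X h a b ^ 2) * B := by
          simp_rw [← Finset.sum_mul]
          congr 1
          rw [sum_comm3]
          exact Finset.sum_congr rfl fun h _ => sum_pair2 m (fun a b => X h a b ^ 2)
  have hXnn : 0 ≤ ∑ h : Fin c', ∑ a : Fin (2 * m), ∑ b : Fin (2 * m), X h a b ^ 2 :=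
    Finset.sum_nonneg fun _ _ => Finset.sum_nonneg fun _ _ =>
      Finset.sum_nonneg fun _ _ => sq_nonneg _
  rw [← Real.sqrt_mul hXnn]
  exact Real.sqrt_le_sqrt hsum

end
end

section
/- The convolution-stride slicer with unit-norm kernels is a linear functional of Euclidean norm at most 1 (key step in the proof of Proposition 2): suppose each kernel K^{(1)} ∈ ℝ^{c×2×2}, K^{(h)} ∈ ℝ^{1×2×2} (2 ≤ h ≤ N−1), K^{(N)} ∈ ℝ^{1×a×a} satisfies ‖K^{(h)}‖₂ = 1. Then there exists Θ ∈ ℝ^{c×d×d} with ‖Θ‖₂ ≤ 1 such that CS-s(X|K^{(1)},…,K^{(N)}) = Σ_{h=1}^{c} Σ_{i=1}^{d} Σ_{j=1}^{d} Θ_{h,i,j}·X_{h,i,j} for all X ∈ ℝ^{c×d×d}. In particular, X ↦ CS-s(X|K^{(1)},…,K^{(N)}) is linear and 1-Lipschitz. -/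
open MeasureTheory ENNReal

noncomputable section

/-- Iterated stride-2 convolutions with single-channel `1 × 2 × 2` kernels, going from
spatial size `2^k * a` down to size `a`; `Ks 0` is applied first. -/
def midConv (a : ℕ) : (k : ℕ) → (Fin k → Fin 1 → Fin 2 → Fin 2 → ℝ) →
    (Fin (2 ^ k * a) → Fin (2 ^ k * a) → ℝ) → Fin a → Fin a → ℝ
  | 0, _, X, i, j => X (Fin.cast (by ring) i) (Fin.cast (by ring) j)
  | k + 1, Ks, X, i, j =>
      midConv a k (fun t => Ks t.succ)
        (convStride2 (2 ^ k * a)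
          (fun _ r s => X (Fin.cast (by ring) r) (Fin.cast (by ring) s))
          (Ks 0)) i j

/-- The space of `c × d × d` images, with the Euclidean (ℓ2) norm. -/
abbrev TensorSpace (c d : ℕ) := EuclideanSpace ℝ (Fin c × Fin d × Fin d)

/-- The convolution-stride slicer `CS-s(·|K^(1),…,K^(N))` with `N = M + 2` kernels, on images of
size `c × d × d` where `d = 2^(M+1) * a`: a stride-2 convolution with the `c × 2 × 2` kernel `K1`,
then `M` stride-2 convolutions with the `1 × 2 × 2` kernels `Ks`, then the inner product with the
`1 × a × a` kernel `KN`. -/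
def CSs (c a M : ℕ) (K1 : Fin c → Fin 2 → Fin 2 → ℝ)
    (Ks : Fin M → Fin 1 → Fin 2 → Fin 2 → ℝ) (KN : Fin 1 → Fin a → Fin a → ℝ)
    (X : TensorSpace c (2 ^ (M + 1) * a)) : ℝ :=
  ∑ i : Fin a, ∑ j : Fin a,
    midConv a M Ks
      (convStride2 (2 ^ M * a)
        (fun h r s => X (h, Fin.cast (by ring) r, Fin.cast (by ring) s)) K1) i j * KN 0 i j

/-! Each stride-2 convolution with a `2 × 2` kernel `K` is linear, and since its `2 × 2` patches
tile the input, Cauchy–Schwarz on each patch bounds the ℓ2-norm of its output by `‖K‖₂` times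
that of its input; the final pairing with `K^(N)` is bounded by `‖K^(N)‖₂` in the same way. So with
unit kernels the slicer is a linear functional of operator norm at most 1, and the Riesz
representation gives `Θ`. -/

theorem sq_sum_sum_sum_mul_le {ι κ μ : Type*} [Fintype ι] [Fintype κ] [Fintype μ]
    (f g : ι → κ → μ → ℝ) :
    (∑ i, ∑ j, ∑ k, f i j k * g i j k) ^ 2 ≤
      (∑ i, ∑ j, ∑ k, f i j k ^ 2) * ∑ i, ∑ j, ∑ k, g i j k ^ 2 := by
  simpa only [Fintype.sum_prod_type] using
    Finset.sum_mul_sq_le_sq_mul_sq Finset.univ (fun p : ι × κ × μ => f p.1 p.2.1 p.2.2)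
      (fun p => g p.1 p.2.1 p.2.2)

theorem sum_sum_fin_cast {M : Type*} [AddCommMonoid M] {n n' : ℕ} (h : n = n')
    (f : Fin n' → Fin n' → M) :
    ∑ r : Fin n, ∑ s : Fin n, f (Fin.cast h r) (Fin.cast h s) = ∑ r, ∑ s, f r s := by
  subst h
  rfl

theorem IsLinearMap.comp {R M M₂ M₃ : Type*} [Semiring R] [AddCommMonoid M] [AddCommMonoid M₂]
    [AddCommMonoid M₃] [Module R M] [Module R M₂] [Module R M₃] {f : M₂ → M₃} {g : M → M₂}
    (hf : IsLinearMap R f) (hg : IsLinearMap R g) : IsLinearMap R (f ∘ g) :=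
  ((hf.mk' f).comp (hg.mk' g)).isLinear

theorem exists_norm_le_one_of_abs_le {ι : Type*} [Fintype ι] {f : EuclideanSpace ℝ ι → ℝ}
    (hf : IsLinearMap ℝ f) (hb : ∀ x, |f x| ≤ ‖x‖) :
    ∃ θ : EuclideanSpace ℝ ι, ‖θ‖ ≤ 1 ∧ ∀ x, f x = ∑ i, θ i * x i := by
  have hb' : ∀ x, ‖hf.mk' f x‖ ≤ 1 * ‖x‖ := fun x => by simpa using hb x
  let ℓ := (hf.mk' f).mkContinuous 1 hb'
  refine ⟨(InnerProductSpace.toDual ℝ _).symm ℓ, ?_, fun x => ?_⟩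
  · rw [LinearIsometryEquiv.norm_map]
    exact LinearMap.mkContinuous_norm_le _ zero_le_one hb'
  · have riesz := InnerProductSpace.toDual_symm_apply (x := x) (y := ℓ)
    rw [PiLp.inner_apply] at riesz
    simpa [ℓ, mul_comm] using riesz.symm

theorem lipschitzWith_one_of_abs_le {E : Type*} [SeminormedAddCommGroup E] [Module ℝ E]
    {f : E → ℝ} (hf : IsLinearMap ℝ f) (hb : ∀ x, |f x| ≤ ‖x‖) : LipschitzWith 1 f := by
  have h := AddMonoidHomClass.lipschitz_of_bound (hf.mk' f) 1 fun x => by simpa using hb x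
  rwa [Real.toNNReal_one] at h

def strideEquiv (m : ℕ) : Fin m × Fin 2 ≃ Fin (2 * m) :=
  finProdFinEquiv.trans (finCongr (Nat.mul_comm m 2))

theorem strideEquiv_apply {m : ℕ} (i : Fin m) (i' : Fin 2) :
    strideEquiv m (i, i') = ⟨2 * i.1 + i'.1, by omega⟩ := by
  ext
  simp [strideEquiv, finProdFinEquiv]
  ring

theorem sum_strideEquiv {M : Type*} [AddCommMonoid M] {m : ℕ} (f : Fin (2 * m) → M) :
    ∑ i : Fin m, ∑ i' : Fin 2, f (strideEquiv m (i, i')) = ∑ r, f r := by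
  rw [← Fintype.sum_prod_type']
  exact (strideEquiv m).sum_comp f

theorem sum_sum_strideEquiv {M : Type*} [AddCommMonoid M] {m : ℕ}
    (f : Fin (2 * m) → Fin (2 * m) → M) :
    ∑ i : Fin m, ∑ j : Fin m, ∑ i' : Fin 2, ∑ j' : Fin 2,
      f (strideEquiv m (i, i')) (strideEquiv m (j, j')) = ∑ r, ∑ s, f r s := by
  simp only [← sum_strideEquiv (m := m)]
  exact Finset.sum_congr rfl fun _ _ => Finset.sum_comm

theorem convStride2_eq {c' m : ℕ} (X : Fin c' → Fin (2 * m) → Fin (2 * m) → ℝ)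
    (K : Fin c' → Fin 2 → Fin 2 → ℝ) (i j : Fin m) :
    convStride2 m X K i j =
      ∑ h, ∑ i', ∑ j', X h (strideEquiv m (i, i')) (strideEquiv m (j, j')) * K h i' j' := by
  simp only [convStride2, strideEquiv_apply]

theorem sum_sq_convStride2_le {c' m : ℕ} (X : Fin c' → Fin (2 * m) → Fin (2 * m) → ℝ)
    (K : Fin c' → Fin 2 → Fin 2 → ℝ) :
    ∑ i, ∑ j, convStride2 m X K i j ^ 2 ≤
      (∑ h, ∑ i', ∑ j', K h i' j' ^ 2) * ∑ h, ∑ r, ∑ s, X h r s ^ 2 := by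
  calc ∑ i, ∑ j, convStride2 m X K i j ^ 2
      ≤ ∑ i, ∑ j, (∑ h, ∑ i', ∑ j', X h (strideEquiv m (i, i')) (strideEquiv m (j, j')) ^ 2) *
          ∑ h, ∑ i', ∑ j', K h i' j' ^ 2 := by
        gcongr with i _ j _
        rw [convStride2_eq]
        exact sq_sum_sum_sum_mul_le _ _
    _ = (∑ h, ∑ i', ∑ j', K h i' j' ^ 2) * ∑ h, ∑ r, ∑ s, X h r s ^ 2 := by
        simp only [← Finset.sum_mul, ← sum_sum_strideEquiv (X _ · · ^ 2)]
        rw [mul_comm]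
        congr 1
        rw [← Fintype.sum_prod_type', Finset.sum_comm]
        simp only [Fintype.sum_prod_type]

theorem isLinearMap_convStride2 {c' : ℕ} (m : ℕ) (K : Fin c' → Fin 2 → Fin 2 → ℝ) :
    IsLinearMap ℝ (convStride2 m · K) where
  map_add X Y := by
    ext i j
    simp only [convStride2, Pi.add_apply, add_mul, Finset.sum_add_distrib]
  map_smul t X := by
    ext i j
    simp only [convStride2, Pi.smul_apply, smul_eq_mul, Finset.mul_sum, mul_assoc]

theorem sum_sq_midConv_le (a : ℕ) {k : ℕ} {Ks : Fin k → Fin 1 → Fin 2 → Fin 2 → ℝ}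
    (hKs : ∀ t, ∑ h, ∑ i, ∑ j, Ks t h i j ^ 2 ≤ 1) (X : Fin (2 ^ k * a) → Fin (2 ^ k * a) → ℝ) :
    ∑ i, ∑ j, midConv a k Ks X i j ^ 2 ≤ ∑ r, ∑ s, X r s ^ 2 := by
  induction k with
  | zero => exact (sum_sum_fin_cast _ (X · · ^ 2)).le
  | succ k ih =>
    calc ∑ i, ∑ j, midConv a (k + 1) Ks X i j ^ 2
        ≤ ∑ r, ∑ s, convStride2 (2 ^ k * a)
            (fun _ r s => X (Fin.cast (by ring) r) (Fin.cast (by ring) s)) (Ks 0) r s ^ 2 :=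
          ih (fun t => hKs t.succ) _
      _ ≤ (∑ h, ∑ i, ∑ j, Ks 0 h i j ^ 2) *
            ∑ _ : Fin 1, ∑ r : Fin (2 * (2 ^ k * a)), ∑ s : Fin (2 * (2 ^ k * a)),
              X (Fin.cast (by ring) r) (Fin.cast (by ring) s) ^ 2 :=
          sum_sq_convStride2_le (fun _ r s => X (Fin.cast (by ring) r) (Fin.cast (by ring) s)) _
      _ ≤ ∑ r, ∑ s, X r s ^ 2 := by
          rw [Fin.sum_const, one_smul, sum_sum_fin_cast _ (X · · ^ 2)]
          exact mul_le_of_le_one_left (by positivity) (hKs 0)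

theorem isLinearMap_midConv (a : ℕ) {k : ℕ} (Ks : Fin k → Fin 1 → Fin 2 → Fin 2 → ℝ) :
    IsLinearMap ℝ (midConv a k Ks) := by
  induction k with
  | zero => exact ⟨fun _ _ => rfl, fun _ _ => rfl⟩
  | succ k ih =>
    have reindex : IsLinearMap ℝ fun (X : Fin (2 ^ (k + 1) * a) → Fin (2 ^ (k + 1) * a) → ℝ)
        (_ : Fin 1) (r s : Fin (2 * (2 ^ k * a))) =>
        X (Fin.cast (by ring) r) (Fin.cast (by ring) s) :=
      ⟨fun _ _ => rfl, fun _ _ => rfl⟩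
    have conv := (isLinearMap_convStride2 (2 ^ k * a) (Ks 0)).comp reindex
    exact (ih fun t => Ks t.succ).comp conv

theorem isLinearMap_CSs (c a M : ℕ) (K1 : Fin c → Fin 2 → Fin 2 → ℝ)
    (Ks : Fin M → Fin 1 → Fin 2 → Fin 2 → ℝ) (KN : Fin 1 → Fin a → Fin a → ℝ) :
    IsLinearMap ℝ (CSs c a M K1 Ks KN) := by
  have pairing : IsLinearMap ℝ fun Y : Fin a → Fin a → ℝ => ∑ i, ∑ j, Y i j * KN 0 i j :=
    ⟨fun Y Z => by simp only [Pi.add_apply, add_mul, Finset.sum_add_distrib],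
      fun t Y => by simp only [Pi.smul_apply, smul_eq_mul, mul_assoc, Finset.mul_sum]⟩
  have reindex : IsLinearMap ℝ fun (X : TensorSpace c (2 ^ (M + 1) * a)) (h : Fin c)
      (r s : Fin (2 * (2 ^ M * a))) => X (h, Fin.cast (by ring) r, Fin.cast (by ring) s) :=
    ⟨fun _ _ => rfl, fun _ _ => rfl⟩
  exact pairing.comp ((isLinearMap_midConv a Ks).comp
    ((isLinearMap_convStride2 (2 ^ M * a) K1).comp reindex))

theorem abs_CSs_le {c a M : ℕ} {K1 : Fin c → Fin 2 → Fin 2 → ℝ}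
    {Ks : Fin M → Fin 1 → Fin 2 → Fin 2 → ℝ} {KN : Fin 1 → Fin a → Fin a → ℝ}
    (hK1 : ∑ h, ∑ i, ∑ j, K1 h i j ^ 2 ≤ 1) (hKs : ∀ t, ∑ h, ∑ i, ∑ j, Ks t h i j ^ 2 ≤ 1)
    (hKN : ∑ h, ∑ i, ∑ j, KN h i j ^ 2 ≤ 1) (X : TensorSpace c (2 ^ (M + 1) * a)) :
    |CSs c a M K1 Ks KN X| ≤ ‖X‖ := by
  set Xr : Fin c → Fin (2 * (2 ^ M * a)) → Fin (2 * (2 ^ M * a)) → ℝ :=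
    fun h r s => X (h, Fin.cast (by ring) r, Fin.cast (by ring) s)
  set Y := midConv a M Ks (convStride2 (2 ^ M * a) Xr K1)
  have hXr : ∑ h, ∑ r, ∑ s, Xr h r s ^ 2 = ‖X‖ ^ 2 := by
    rw [EuclideanSpace.norm_sq_eq, Fintype.sum_prod_type]
    refine Finset.sum_congr rfl fun h _ => ?_
    rw [sum_sum_fin_cast _ fun r s => X (h, r, s) ^ 2, Fintype.sum_prod_type]
    simp only [Real.norm_eq_abs, sq_abs]
  rw [← Real.sqrt_sq_eq_abs, ← Real.sqrt_sq (norm_nonneg X)]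
  apply Real.sqrt_le_sqrt
  calc CSs c a M K1 Ks KN X ^ 2 = (∑ h : Fin 1, ∑ i, ∑ j, Y i j * KN h i j) ^ 2 := by
        rw [Fin.sum_univ_one]
        rfl
    _ ≤ (∑ _ : Fin 1, ∑ i, ∑ j, Y i j ^ 2) * ∑ h, ∑ i, ∑ j, KN h i j ^ 2 :=
        sq_sum_sum_sum_mul_le _ _
    _ ≤ ∑ i, ∑ j, Y i j ^ 2 := by
        rw [Fin.sum_const, one_smul]
        exact mul_le_of_le_one_right (by positivity) hKN
    _ ≤ ∑ r, ∑ s, convStride2 _ Xr K1 r s ^ 2 := sum_sq_midConv_le a hKs _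
    _ ≤ (∑ h, ∑ i, ∑ j, K1 h i j ^ 2) * ∑ h, ∑ r, ∑ s, Xr h r s ^ 2 :=
        sum_sq_convStride2_le Xr K1
    _ ≤ ‖X‖ ^ 2 := by
        rw [← hXr]
        exact mul_le_of_le_one_left (by positivity) hK1

theorem CSs_linear_functional_general (c a M : ℕ)
    (K1 : Fin c → Fin 2 → Fin 2 → ℝ) (Ks : Fin M → Fin 1 → Fin 2 → Fin 2 → ℝ)
    (KN : Fin 1 → Fin a → Fin a → ℝ)
    (hK1 : Real.sqrt (∑ h : Fin c, ∑ i : Fin 2, ∑ j : Fin 2, K1 h i j ^ 2) = 1)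
    (hKs : ∀ t : Fin M,
      Real.sqrt (∑ h : Fin 1, ∑ i : Fin 2, ∑ j : Fin 2, Ks t h i j ^ 2) = 1)
    (hKN : Real.sqrt (∑ h : Fin 1, ∑ i : Fin a, ∑ j : Fin a, KN h i j ^ 2) = 1) :
    ∃ Θ : TensorSpace c (2 ^ (M + 1) * a), ‖Θ‖ ≤ 1 ∧
      (∀ X : TensorSpace c (2 ^ (M + 1) * a),
        CSs c a M K1 Ks KN X =
          ∑ h : Fin c, ∑ i : Fin (2 ^ (M + 1) * a), ∑ j : Fin (2 ^ (M + 1) * a),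
            Θ (h, i, j) * X (h, i, j)) ∧
      IsLinearMap ℝ (CSs c a M K1 Ks KN) ∧ LipschitzWith 1 (CSs c a M K1 Ks KN) := by
  have hlin := isLinearMap_CSs c a M K1 Ks KN
  have hbound := abs_CSs_le (Real.sqrt_eq_one.mp hK1).le
    (fun t => (Real.sqrt_eq_one.mp (hKs t)).le) (Real.sqrt_eq_one.mp hKN).le
  obtain ⟨Θ, hΘ, hrepr⟩ := exists_norm_le_one_of_abs_le hlin hbound
  refine ⟨Θ, hΘ, fun X => ?_, hlin, lipschitzWith_one_of_abs_le hlin hbound⟩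
  simp only [hrepr, Fintype.sum_prod_type]

/-- The convolution-stride slicer with unit-norm kernels is a linear functional of Euclidean norm
at most 1: there is `Θ ∈ ℝ^{c×d×d}` with `‖Θ‖₂ ≤ 1` such that
`CS-s(X|K^(1),…,K^(N)) = ∑_{h,i,j} Θ_{h,i,j} X_{h,i,j}`; in particular the slicer is linear and
1-Lipschitz. Here `d = 2^(M+1)·a`, i.e. `N = M + 2 ≥ 2`. -/
theorem CSs_linear_functional (c a M : ℕ) (hc : 1 ≤ c) (ha : 1 ≤ a)
    (K1 : Fin c → Fin 2 → Fin 2 → ℝ) (Ks : Fin M → Fin 1 → Fin 2 → Fin 2 → ℝ)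
    (KN : Fin 1 → Fin a → Fin a → ℝ)
    (hK1 : Real.sqrt (∑ h : Fin c, ∑ i : Fin 2, ∑ j : Fin 2, K1 h i j ^ 2) = 1)
    (hKs : ∀ t : Fin M,
      Real.sqrt (∑ h : Fin 1, ∑ i : Fin 2, ∑ j : Fin 2, Ks t h i j ^ 2) = 1)
    (hKN : Real.sqrt (∑ h : Fin 1, ∑ i : Fin a, ∑ j : Fin a, KN h i j ^ 2) = 1) :
    ∃ Θ : TensorSpace c (2 ^ (M + 1) * a), ‖Θ‖ ≤ 1 ∧
      (∀ X : TensorSpace c (2 ^ (M + 1) * a),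
        CSs c a M K1 Ks KN X =
          ∑ h : Fin c, ∑ i : Fin (2 ^ (M + 1) * a), ∑ j : Fin (2 ^ (M + 1) * a),
            Θ (h, i, j) * X (h, i, j)) ∧
      IsLinearMap ℝ (CSs c a M K1 Ks KN) ∧ LipschitzWith 1 (CSs c a M K1 Ks KN) :=
  CSs_linear_functional_general c a M K1 Ks KN hK1 hKs hKN
end
end
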